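/- arXiv:2112.05714 — 3 statements merged into one kernel-verified Lean document; each statement's English description precedes it below -/
import Mathlib

section
/- Let X be a connected topological n-manifold, i.e., a nonempty connected Hausdorff topological space that is a charted space modelled on EuclideanSpace ℝ (Fin n). Then X is topologically homogeneous: for any two points p, q ∈ X there exists a homeomorphism h : X → X with h(p) = q. -/
/-!
The orbits of the homeomorphism group of `X` are the classes of an equivalence relation; if they
are open, connectedness leaves only one. Openness is local. In a ball of the model space, the
centre `c` is pushed to any point `b` of the ball by `v ↦ v + φ v • (b - c)`, where `φ` is the tent
function of height `1` at `c` vanishing off the ball: this is the identity plus a contraction, hence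
a homeomorphism, and it is the identity off the ball. As the closed ball is compact and `X` is
Hausdorff, its preimage under a chart is closed in `X`, so the map transported by the chart extends
by the identity to a homeomorphism of `X`.
-/

open Set Metric Topology
open scoped NNReal

section IdAddLipschitz

variable {𝕜 E : Type*} [NontriviallyNormedField 𝕜] [NormedAddCommGroup E] [NormedSpace 𝕜 E]
  [CompleteSpace E] {g : E → E} {K : ℝ≥0}

variable (𝕜) in
noncomputable def LipschitzWith.idAddHomeomorph (hg : LipschitzWith K g) (hK : K < 1) :
    E ≃ₜ E :=
  ApproximatesLinearOn.toHomeomorph (𝕜 := 𝕜) (fun v => v + g v)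
    (f' := ContinuousLinearEquiv.refl 𝕜 E)
    (LipschitzOnWith.approximatesLinearOn <| by
      convert hg.lipschitzOnWith (s := univ)
      ext v
      simp)
    (by
      rcases subsingleton_or_nontrivial E with h | h
      · exact .inl h
      · simpa using .inr hK)

@[simp]
theorem LipschitzWith.idAddHomeomorph_apply (hg : LipschitzWith K g) (hK : K < 1) (v : E) :
    hg.idAddHomeomorph 𝕜 hK v = v + g v :=
  rfl

end IdAddLipschitz

theorem exists_homeomorph_apply_eq_of_mem_ball {E : Type*} [NormedAddCommGroup E]
    [NormedSpace ℝ E] [CompleteSpace E] {c b : E} {r : ℝ} (hb : b ∈ ball c r) :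
    ∃ F : E ≃ₜ E, F c = b ∧ ∀ v ∉ ball c r, F v = v := by
  have hr : 0 < r := pos_of_mem_ball hb
  set bump : E → ℝ := fun v => max (1 - dist v c / r) 0
  have hbump : ∀ v w, |bump v - bump w| ≤ dist v w / r := fun v w =>
    calc |bump v - bump w| ≤ |(1 - dist v c / r) - (1 - dist w c / r)| :=
          abs_max_sub_max_le_abs _ _ _
      _ = |dist v c - dist w c| / r := by
          rw [sub_sub_sub_cancel_left, ← sub_div, abs_div, abs_of_pos hr, abs_sub_comm]
      _ ≤ dist v w / r := by gcongr; exact abs_dist_sub_le v w c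
  have hlip : LipschitzWith (dist b c / r).toNNReal fun v => bump v • (b - c) :=
    .of_dist_le' fun v w => by
      calc dist (bump v • (b - c)) (bump w • (b - c)) = |bump v - bump w| * dist b c := by
            rw [dist_eq_norm, ← sub_smul, norm_smul, Real.norm_eq_abs, dist_eq_norm]
        _ ≤ dist v w / r * dist b c := by gcongr; exact hbump v w
        _ = dist b c / r * dist v w := by ring
  have hK : (dist b c / r).toNNReal < 1 := by
    rw [Real.toNNReal_lt_one, div_lt_one hr]; exact hb
  refine ⟨hlip.idAddHomeomorph ℝ hK, ?_, fun v hv => ?_⟩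
  · simp [bump]
  · have : bump v = 0 := max_eq_right (by
      rw [sub_nonpos, one_le_div hr]; exact not_lt.mp hv)
    simp [this]

theorem Set.mapsTo_of_injective_of_forall_notMem_eq {α : Type*} {s K : Set α} (hKs : K ⊆ s)
    {G : α → α} (hG : G.Injective) (hGK : ∀ v ∉ K, G v = v) : MapsTo G s s := by
  intro v hv
  by_cases hGv : G v ∈ K
  · exact hKs hGv
  · rwa [hG (hGK _ hGv)]

namespace OpenPartialHomeomorph

open scoped Classical

variable {X E : Type*} [TopologicalSpace X] [TopologicalSpace E] (e : OpenPartialHomeomorph X E)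

noncomputable def conjExtend (G : E → E) : X → X :=
  e.source.piecewise (e.symm ∘ G ∘ e) id

theorem conjExtend_of_mem {G : E → E} {z : X} (hz : z ∈ e.source) :
    e.conjExtend G z = e.symm (G (e z)) :=
  piecewise_eq_of_mem _ _ _ hz

theorem conjExtend_of_notMem {G : E → E} {z : X} (hz : z ∉ e.source) : e.conjExtend G z = z :=
  piecewise_eq_of_notMem _ _ _ hz

theorem conjExtend_id : e.conjExtend id = id := by
  ext z
  by_cases hz : z ∈ e.source
  · exact (e.conjExtend_of_mem hz).trans (e.left_inv hz)
  · exact e.conjExtend_of_notMem hz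

theorem conjExtend_comp {G G' : E → E} (hG' : MapsTo G' e.target e.target) :
    e.conjExtend G ∘ e.conjExtend G' = e.conjExtend (G ∘ G') := by
  ext z
  by_cases hz : z ∈ e.source
  · have hG'z : G' (e z) ∈ e.target := hG' (e.map_source hz)
    simp only [Function.comp_apply, e.conjExtend_of_mem hz,
      e.conjExtend_of_mem (e.map_target hG'z), e.right_inv hG'z]
  · simp only [Function.comp_apply, e.conjExtend_of_notMem hz]

variable [T2Space X] {K : Set E}

theorem continuous_conjExtend (hK : IsCompact K) (hKe : K ⊆ e.target) {G : E → E}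
    (hG : Continuous G) (hGe : MapsTo G e.target e.target) (hGK : ∀ v ∉ K, G v = v) :
    Continuous (e.conjExtend G) := by
  have hKX : IsCompact (e.symm '' K) := hK.image_of_continuousOn (e.continuousOn_symm.mono hKe)
  have hcover : e.source ∪ (e.symm '' K)ᶜ = univ := by
    refine eq_univ_of_forall fun z => or_iff_not_imp_right.mpr fun hz => ?_
    obtain ⟨v, hv, rfl⟩ := not_not.mp hz
    exact e.map_target (hKe hv)
  rw [← continuousOn_univ, ← hcover,
    continuousOn_union_iff_of_isOpen e.open_source hKX.isClosed.isOpen_compl]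
  constructor
  · refine ContinuousOn.congr ?_ fun z hz => e.conjExtend_of_mem hz
    exact e.continuousOn_symm.comp (hG.comp_continuousOn e.continuousOn)
      fun z hz => hGe (e.map_source hz)
  · refine continuousOn_id.congr fun z hz => ?_
    by_cases hzs : z ∈ e.source
    · have hezK : e z ∉ K := fun h => hz ⟨e z, h, e.left_inv hzs⟩
      rw [e.conjExtend_of_mem hzs, hGK _ hezK, e.left_inv hzs, id]
    · exact e.conjExtend_of_notMem hzs

theorem exists_homeomorph_eqOn_conj (hK : IsCompact K) (hKe : K ⊆ e.target) (F : E ≃ₜ E)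
    (hF : ∀ v ∉ K, F v = v) : ∃ h : X ≃ₜ X, ∀ z ∈ e.source, h z = e.symm (F (e z)) := by
  have hF' : ∀ v ∉ K, F.symm v = v := fun v hv => F.symm_apply_eq.mpr (hF v hv).symm
  have hFe := mapsTo_of_injective_of_forall_notMem_eq hKe F.injective hF
  have hF'e := mapsTo_of_injective_of_forall_notMem_eq hKe F.symm.injective hF'
  have hleft : e.conjExtend F.symm ∘ e.conjExtend F = id := by
    rw [e.conjExtend_comp hFe, F.symm_comp_self, conjExtend_id]
  have hright : e.conjExtend F ∘ e.conjExtend F.symm = id := by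
    rw [e.conjExtend_comp hF'e, F.self_comp_symm, conjExtend_id]
  refine ⟨⟨⟨e.conjExtend F, e.conjExtend F.symm, congrFun hleft, congrFun hright⟩,
    e.continuous_conjExtend hK hKe F.continuous hFe hF,
    e.continuous_conjExtend hK hKe F.symm.continuous hF'e hF'⟩,
    fun z hz => e.conjExtend_of_mem hz⟩

end OpenPartialHomeomorph

theorem ChartedSpace.eventually_exists_homeomorph_apply_eq (E : Type*) {X : Type*}
    [NormedAddCommGroup E] [NormedSpace ℝ E] [ProperSpace E]
    [TopologicalSpace X] [T2Space X] [ChartedSpace E X]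
    (x : X) : ∀ᶠ y in 𝓝 x, ∃ h : X ≃ₜ X, h x = y := by
  set e := chartAt E x
  have hx : x ∈ e.source := mem_chart_source E x
  obtain ⟨r, hr, hre⟩ :=
    nhds_basis_closedBall.mem_iff.mp (e.open_target.mem_nhds (mem_chart_target E x))
  filter_upwards [e.open_source.mem_nhds hx, e.continuousAt hx (ball_mem_nhds (e x) hr)]
    with y hy hyr
  obtain ⟨F, hFx, hF⟩ := exists_homeomorph_apply_eq_of_mem_ball hyr
  obtain ⟨h, hh⟩ := e.exists_homeomorph_eqOn_conj (isCompact_closedBall (e x) r) hre F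
    fun v hv => hF v fun hvr => hv (ball_subset_closedBall hvr)
  exact ⟨h, by rw [hh x hx, hFx, e.left_inv hy]⟩

theorem connected_manifold_homogeneous_general
    (n : ℕ) (X : Type*) [TopologicalSpace X] [T2Space X]
    [ChartedSpace (EuclideanSpace ℝ (Fin n)) X]
    [ConnectedSpace X]
    (p q : X) :
    ∃ h : X ≃ₜ X, h p = q := by
  refine PreconnectedSpace.induction₂' (fun x y => ∃ h : X ≃ₜ X, h x = y) (fun x => ?_)
    ⟨fun x y z => ?_⟩ p q
  · filter_upwards [ChartedSpace.eventually_exists_homeomorph_apply_eq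
      (EuclideanSpace ℝ (Fin n)) x] with y ⟨h, hy⟩
    exact ⟨⟨h, hy⟩, h.symm, h.symm_apply_eq.mpr hy.symm⟩
  · rintro ⟨f, rfl⟩ ⟨g, rfl⟩
    exact ⟨f.trans g, rfl⟩

/-- **Homogeneity of connected manifolds.** A nonempty connected Hausdorff topological
`n`-manifold (a charted space modelled on `EuclideanSpace ℝ (Fin n)`) is topologically
homogeneous: any point can be moved to any other point by a self-homeomorphism. -/
theorem connected_manifold_homogeneous
    (n : ℕ) (X : Type*) [TopologicalSpace X] [T2Space X]
    [ChartedSpace (EuclideanSpace ℝ (Fin n)) X]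
    [Nonempty X] [ConnectedSpace X]
    (p q : X) :
    ∃ h : X ≃ₜ X, h p = q :=
  connected_manifold_homogeneous_general n X p q
end

section
/- Let X be a topological space, A ⊆ X a nonempty closed subset, and F a nonempty locally compact topological space. Then the quotient space (X × F)/(A × F), obtained by collapsing the subset A × F of X × F to a single point, is homeomorphic to the quotient ((X/A) × F)/({a₀} × F), where X/A is the quotient of X collapsing A to a single point a₀, and the second quotient collapses the slice {a₀} × F to a point. -/
/-- The setoid on `Y` identifying all the points of `S` with one another. -/
def collapseSetoid {Y : Type*} (S : Set Y) : Setoid Y where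
  r a b := a = b ∨ (a ∈ S ∧ b ∈ S)
  iseqv := by
    constructor
    · intro a; exact Or.inl rfl
    · rintro a b (rfl | ⟨h₁, h₂⟩)
      · exact Or.inl rfl
      · exact Or.inr ⟨h₂, h₁⟩
    · rintro a b c (rfl | ⟨h₁, h₂⟩) (rfl | ⟨h₃, h₄⟩)
      · exact Or.inl rfl
      · exact Or.inr ⟨h₃, h₄⟩
      · exact Or.inr ⟨h₁, h₂⟩
      · exact Or.inr ⟨h₁, h₄⟩

/-- The quotient space `Y/S` collapsing the subset `S` of `Y` to a single point,
equipped with the quotient topology. -/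
def Collapse (Y : Type*) [TopologicalSpace Y] (S : Set Y) : Type _ :=
  Quotient (collapseSetoid S)

instance (Y : Type*) [TopologicalSpace Y] (S : Set Y) : TopologicalSpace (Collapse Y S) :=
  instTopologicalSpaceQuotient

/-- The canonical quotient map `Y → Y/S`. -/
def Collapse.mk {Y : Type*} [TopologicalSpace Y] (S : Set Y) (y : Y) : Collapse Y S :=
  Quotient.mk (collapseSetoid S) y

/-- **Collapsing a product slice.** For a nonempty closed subset `A ⊆ X` and a nonempty
locally compact space `F`, the quotient `(X × F)/(A × F)` is homeomorphic to
`((X/A) × F)/({a₀} × F)`, where `a₀` is the point of `X/A` to which `A` is collapsed. -/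
theorem collapse_prod_homeomorph_collapse_collapse_prod
    {X F : Type*} [TopologicalSpace X] [TopologicalSpace F]
    (A : Set X) (hA : A.Nonempty) (hAclosed : IsClosed A)
    [Nonempty F] [LocallyCompactSpace F]
    (a₀ : X) (ha₀ : a₀ ∈ A) :
    Nonempty (Collapse (X × F) (A ×ˢ (Set.univ : Set F)) ≃ₜ
      Collapse (Collapse X A × F) ({Collapse.mk A a₀} ×ˢ (Set.univ : Set F))) := by
  set Q1 := Collapse (X × F) (A ×ˢ (Set.univ : Set F))
  set S2 : Set (Collapse X A × F) := {Collapse.mk A a₀} ×ˢ (Set.univ : Set F)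
  set Q2 := Collapse (Collapse X A × F) S2
  -- mk for X/A
  have hmkA : ∀ x, x ∈ A → Collapse.mk A x = Collapse.mk A a₀ := by
    intro x hx
    exact Quotient.sound (Or.inr ⟨hx, ha₀⟩)
  -- forward map
  have hφrespect : ∀ p q : X × F, (collapseSetoid (A ×ˢ (Set.univ : Set F))).r p q →
      Collapse.mk S2 (Collapse.mk A p.1, p.2) = Collapse.mk S2 (Collapse.mk A q.1, q.2) := by
    rintro p q (rfl | ⟨⟨hp, -⟩, ⟨hq, -⟩⟩)
    · rfl
    · exact Quotient.sound (Or.inr ⟨⟨hmkA _ hp, trivial⟩, ⟨hmkA _ hq, trivial⟩⟩)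
  let Φ : Q1 → Q2 := Quotient.lift (fun p : X × F => Collapse.mk S2 (Collapse.mk A p.1, p.2))
    hφrespect
  have hΦcont : Continuous Φ := by
    apply continuous_quot_lift
    exact continuous_quot_mk.comp ((continuous_quot_mk.comp continuous_fst).prodMk
      continuous_snd)
  -- intermediate map g : Collapse X A × F → Q1
  have hgwd : ∀ (f : F) (x y : X), (collapseSetoid A).r x y →
      Collapse.mk (A ×ˢ (Set.univ : Set F)) (x, f) =
        Collapse.mk (A ×ˢ (Set.univ : Set F)) (y, f) := by
    rintro f x y (rfl | ⟨hx, hy⟩)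
    · rfl
    · exact Quotient.sound (Or.inr ⟨⟨hx, trivial⟩, ⟨hy, trivial⟩⟩)
  let g : Collapse X A × F → Q1 := fun p =>
    Quotient.lift (fun x : X => Collapse.mk (A ×ˢ (Set.univ : Set F)) (x, p.2))
      (hgwd p.2) p.1
  have hqm : Topology.IsQuotientMap (Collapse.mk A) := isQuotientMap_quot_mk
  have hgcont : Continuous g := by
    apply hqm.continuous_lift_prod_left
    exact continuous_quot_mk
  -- g respects the Q2 relation
  have hgrespect : ∀ p q : Collapse X A × F, (collapseSetoid S2).r p q → g p = g q := by
    rintro ⟨c, f⟩ ⟨c', f'⟩ h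
    rcases h with heq | ⟨⟨hc, -⟩, ⟨hc', -⟩⟩
    · rw [heq]
    · simp only [Set.mem_singleton_iff] at hc hc'
      subst hc; subst hc'
      show Collapse.mk _ (a₀, f) = Collapse.mk _ (a₀, f')
      exact Quotient.sound (Or.inr ⟨⟨ha₀, trivial⟩, ⟨ha₀, trivial⟩⟩)
  let Ψ : Q2 → Q1 := Quotient.lift g hgrespect
  have hΨcont : Continuous Ψ := continuous_quot_lift _ hgcont
  refine ⟨⟨⟨Φ, Ψ, ?_, ?_⟩, hΦcont, hΨcont⟩⟩
  · intro q
    induction q using Quotient.inductionOn with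
    | h p => rfl
  · intro q
    induction q using Quotient.inductionOn with
    | h p =>
      obtain ⟨c, f⟩ := p
      induction c using Quotient.inductionOn with
      | h x => rfl
end

section
/- Let S⁴ and S⁷ be the unit spheres in 5-dimensional and 8-dimensional Euclidean space respectively, and let e : ℝ¹¹ → S⁴ × S⁷ be any open embedding of 11-dimensional Euclidean space into the product manifold S⁴ × S⁷. Then the complement (S⁴ × S⁷) ∖ e(B), where B is the open unit ball in ℝ¹¹, equipped with the subspace topology, is homotopy equivalent to the wedge S⁴ ∨ S⁷. -/
/-- The wedge `X ∨ Y` of two pointed spaces: the quotient of the disjoint union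
identifying the two basepoints to a single point. -/
abbrev Wedge2 (X Y : Type*) [TopologicalSpace X] [TopologicalSpace Y]
    (x₀ : X) (y₀ : Y) : Type _ :=
  Collapse (X ⊕ Y) {Sum.inl x₀, Sum.inr y₀}

/-!
A chart can be pushed radially outwards, so removing the open unit ball of a chart has the
homotopy type of removing its centre. Write each sphere `Sⁿ` as the disk `Dⁿ` with its boundary
collapsed to the basepoint. Then `S⁴ × S⁷` minus the point antipodal to the basepoint is the image
of `D⁴ × D⁷` minus its centre, which retracts radially onto `∂(D⁴ × D⁷) = ∂D⁴ × D⁷ ∪ D⁴ × ∂D⁷`.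
The radial retraction is compatible with the collapse, and it ends in the image of that boundary,
which is the wedge `S⁴ ∨ S⁷ ⊆ S⁴ × S⁷`.
-/

open Metric Set Topology unitInterval Module
open scoped ContinuousMap RealInnerProductSpace

noncomputable section

section DeformationRetraction

variable {X : Type*} [TopologicalSpace X] {A P : Set X}

def ContinuousMap.HomotopyEquiv.ofDeformationRetraction (hAP : A ⊆ P) (H : C(I × P, P))
    (h₀ : ∀ p, H (0, p) = p) (h₁ : ∀ p, (H (1, p) : X) ∈ A)
    (hA : ∀ p : P, (p : X) ∈ A → H (1, p) = p) : A ≃ₕ P where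
  toFun := ⟨inclusion hAP, continuous_inclusion hAP⟩
  invFun := ⟨fun p => ⟨H (1, p), h₁ p⟩, by fun_prop⟩
  left_inv := by
    convert ContinuousMap.Homotopic.refl (ContinuousMap.id A)
    ext a
    show (H (1, inclusion hAP a) : X) = a
    exact congrArg Subtype.val (hA (inclusion hAP a) a.2)
  right_inv := ⟨(ContinuousMap.Homotopy.mk H h₀ fun _ => rfl).symm⟩

end DeformationRetraction

section RadialPush

variable {E : Type*} [NormedAddCommGroup E] {x : E}

lemma radialPush_denom_pos (hx : x ≠ 0) (t : I) : 0 < 1 - t + t * min ‖x‖ 1 := by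
  have hm : 0 < min ‖x‖ 1 := lt_min (norm_pos_iff.2 hx) one_pos
  nlinarith [t.2.1, t.2.2, min_le_right ‖x‖ 1]

variable [NormedSpace ℝ E]

/-- At time `t = 1` this maps the punctured closed unit ball onto the unit sphere; points outside
the open unit ball never move. -/
def radialPush (t : I) (x : E) : E := (1 - t + t * min ‖x‖ 1 : ℝ)⁻¹ • x

lemma radialPush_zero_left (x : E) : radialPush 0 x = x := by simp [radialPush]

lemma radialPush_of_one_le_norm (hx : 1 ≤ ‖x‖) (t : I) : radialPush t x = x := by
  simp [radialPush, min_eq_right hx]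

lemma radialPush_ne_zero (hx : x ≠ 0) (t : I) : radialPush t x ≠ 0 :=
  smul_ne_zero (inv_ne_zero (radialPush_denom_pos hx t).ne') hx

lemma norm_radialPush_one (hx : x ≠ 0) : ‖radialPush 1 x‖ = max ‖x‖ 1 := by
  have hx' := norm_pos_iff.2 hx
  rw [radialPush, norm_smul, Real.norm_eq_abs, Set.Icc.coe_one]
  rcases le_total ‖x‖ 1 with h | h
  · rw [min_eq_left h, max_eq_right h, sub_self, zero_add, one_mul, abs_inv, abs_of_pos hx',
      inv_mul_cancel₀ hx'.ne']
  · simp [min_eq_right h, max_eq_left h]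

lemma norm_radialPush_le_one (hx : ‖x‖ ≤ 1) (t : I) : ‖radialPush t x‖ ≤ 1 := by
  rcases eq_or_ne x 0 with rfl | hx0
  · simp [radialPush]
  have hd := radialPush_denom_pos hx0 t
  rw [min_eq_left hx] at hd
  rw [radialPush, norm_smul, Real.norm_eq_abs, min_eq_left hx, abs_inv, abs_of_pos hd,
    inv_mul_le_iff₀ hd, mul_one]
  nlinarith [t.2.1, t.2.2]

lemma continuousAt_radialPush (hx : x ≠ 0) (t : I) :
    ContinuousAt (fun p : I × E => radialPush p.1 p.2) (t, x) := by
  have hd : Continuous fun p : I × E => (1 - p.1 + p.1 * min ‖p.2‖ 1 : ℝ) := by fun_prop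
  exact (hd.continuousAt.inv₀ (radialPush_denom_pos hx t).ne').smul continuousAt_snd

end RadialPush

section ChartPush

variable {V L : Type*} [NormedAddCommGroup V] [NormedSpace ℝ V] {e : V → L} {y : L}

def chartPush (e : V → L) (t : I) : L → L :=
  Function.extend e (fun x => e (radialPush t x)) id

lemma chartPush_apply (he : e.Injective) (t : I) (x : V) :
    chartPush e t (e x) = e (radialPush t x) :=
  he.extend_apply _ _ x

lemma chartPush_of_notMem_range (hy : y ∉ range e) (t : I) : chartPush e t y = y :=
  Function.extend_apply' _ _ _ hy

lemma chartPush_zero_left (he : e.Injective) (y : L) : chartPush e 0 y = y := by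
  rcases em (y ∈ range e) with ⟨x, rfl⟩ | hy
  · rw [chartPush_apply he, radialPush_zero_left]
  · exact chartPush_of_notMem_range hy 0

lemma chartPush_of_notMem_image_ball (he : e.Injective) (hy : y ∉ e '' ball 0 1) (t : I) :
    chartPush e t y = y := by
  rcases em (y ∈ range e) with ⟨x, rfl⟩ | hy'
  · rw [he.mem_set_image, mem_ball_zero_iff, not_lt] at hy
    rw [chartPush_apply he, radialPush_of_one_le_norm hy]
  · exact chartPush_of_notMem_range hy' t

lemma chartPush_ne (he : e.Injective) (hy : y ≠ e 0) (t : I) : chartPush e t y ≠ e 0 := by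
  rcases em (y ∈ range e) with ⟨x, rfl⟩ | hy'
  · rw [chartPush_apply he, he.ne_iff]
    exact radialPush_ne_zero (he.ne_iff.1 hy) t
  · rwa [chartPush_of_notMem_range hy']

lemma chartPush_one_notMem_image_ball (he : e.Injective) (hy : y ≠ e 0) :
    chartPush e 1 y ∉ e '' ball 0 1 := by
  rcases em (y ∈ range e) with ⟨x, rfl⟩ | hy'
  · rw [chartPush_apply he, he.mem_set_image, mem_ball_zero_iff, not_lt,
      norm_radialPush_one (he.ne_iff.1 hy)]
    exact le_max_right _ _
  · rw [chartPush_of_notMem_range hy']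
    exact fun ⟨x, _, hx⟩ => hy' ⟨x, hx⟩

variable [TopologicalSpace L] [ProperSpace V] [T2Space L]

lemma continuousAt_chartPush (he : IsOpenEmbedding e) (hy : y ≠ e 0) (t : I) :
    ContinuousAt (fun p : I × L => chartPush e p.1 p.2) (t, y) := by
  by_cases hyK : y ∈ e '' closedBall 0 1
  · obtain ⟨x, -, rfl⟩ := hyK
    have hcomp : (fun p : I × L => chartPush e p.1 p.2) ∘ Prod.map id e =
        fun p => e (radialPush p.1 p.2) := funext fun p => chartPush_apply he.injective _ _
    rw [show ((t, e x) : I × L) = Prod.map id e (t, x) from rfl,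
      ← (IsOpenEmbedding.id.prodMap he).continuousAt_iff, hcomp]
    exact he.continuous.continuousAt.comp
      (continuousAt_radialPush (he.injective.ne_iff.1 hy) t)
  · have hK : IsClosed (e '' closedBall 0 1) :=
      ((isCompact_closedBall 0 1).image he.continuous).isClosed
    refine continuousAt_snd.congr ?_
    filter_upwards [continuousAt_snd.preimage_mem_nhds (hK.isOpen_compl.mem_nhds hyK)] with p hp
    exact (chartPush_of_notMem_image_ball he.injective
      (fun h => hp (image_mono ball_subset_closedBall h)) p.1).symm

lemma continuous_chartPush_compl (he : IsOpenEmbedding e) :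
    Continuous fun q : I × ({e 0}ᶜ : Set L) => chartPush e q.1 q.2 :=
  continuous_iff_continuousAt.2 fun q => (continuousAt_chartPush he q.2.2 q.1).comp
    (f := fun q : I × ({e 0}ᶜ : Set L) => (q.1, (q.2 : L)))
    (by fun_prop : Continuous _).continuousAt

def Topology.IsOpenEmbedding.complImageBallHomotopyEquiv (he : IsOpenEmbedding e) :
    ((e '' ball 0 1)ᶜ : Set L) ≃ₕ ({e 0}ᶜ : Set L) :=
  .ofDeformationRetraction
    (fun _ hy h => hy ⟨0, mem_ball_self one_pos, (mem_singleton_iff.1 h).symm⟩)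
    ⟨fun q => ⟨chartPush e q.1 q.2, chartPush_ne he.injective q.2.2 q.1⟩,
      (continuous_chartPush_compl he).subtype_mk _⟩
    (fun p => Subtype.ext (chartPush_zero_left he.injective p))
    (fun p => chartPush_one_notMem_image_ball he.injective p.2)
    (fun _ hp => Subtype.ext (chartPush_of_notMem_image_ball he.injective hp 1))

end ChartPush

section WedgeSet

variable {X Y : Type*}

def wedgeSet (x₀ : X) (y₀ : Y) : Set (X × Y) := {w | w.1 = x₀ ∨ w.2 = y₀}

def wedgeSetMk (x₀ : X) (y₀ : Y) : X ⊕ Y → wedgeSet x₀ y₀ :=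
  Sum.elim (fun x => ⟨(x, y₀), Or.inr rfl⟩) (fun y => ⟨(x₀, y), Or.inl rfl⟩)

lemma wedgeSetMk_eq_iff {x₀ : X} {y₀ : Y} {a b : X ⊕ Y} :
    wedgeSetMk x₀ y₀ a = wedgeSetMk x₀ y₀ b ↔
      (collapseSetoid ({Sum.inl x₀, Sum.inr y₀} : Set (X ⊕ Y))).r a b := by
  change _ ↔ a = b ∨ (a ∈ _ ∧ b ∈ _)
  rcases a with a | a <;> rcases b with b | b <;>
    simp [wedgeSetMk, Subtype.ext_iff] <;> grind

variable [TopologicalSpace X] [TopologicalSpace Y]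

def wedgeHomeomorphWedgeSet [CompactSpace X] [CompactSpace Y] [T2Space X] [T2Space Y]
    (x₀ : X) (y₀ : Y) : Wedge2 X Y x₀ y₀ ≃ₜ wedgeSet x₀ y₀ :=
  haveI : CompactSpace (Wedge2 X Y x₀ y₀) := Quotient.compactSpace
  Continuous.homeoOfEquivCompactToT2
    (f := Equiv.ofBijective (Quotient.lift (wedgeSetMk x₀ y₀) fun _ _ => wedgeSetMk_eq_iff.2)
      ⟨fun a b => Quotient.inductionOn₂ a b fun _ _ h => Quotient.sound (wedgeSetMk_eq_iff.1 h),
        fun ⟨w, hw⟩ => hw.elim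
          (fun h => ⟨Quotient.mk _ (.inr w.2), Subtype.ext (Prod.ext h.symm rfl)⟩)
          (fun h => ⟨Quotient.mk _ (.inl w.1), Subtype.ext (Prod.ext rfl h.symm)⟩)⟩)
    (continuous_quot_lift _ (continuous_sum_dom.2
      ⟨by unfold wedgeSetMk; fun_prop, by unfold wedgeSetMk; fun_prop⟩))

end WedgeSet

section SphereCollapse

variable {V : Type*} [NormedAddCommGroup V] [InnerProductSpace ℝ V] {s x y : V}

def equatorialDisk (s : V) : Set V := ((ℝ ∙ s)ᗮ : Set V) ∩ closedBall 0 1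

/-- For a unit vector `s`, this maps `equatorialDisk s` onto the unit sphere, its centre to `-s`,
its boundary to `s`, and its interior injectively: the disk with its boundary collapsed. -/
def sphereCollapse (s x : V) : V := (2 * √(1 - ‖x‖ ^ 2)) • x + (2 * ‖x‖ ^ 2 - 1) • s

lemma continuous_sphereCollapse (s : V) : Continuous (sphereCollapse s) := by
  unfold sphereCollapse
  fun_prop

lemma inner_sphereCollapse (hs : ‖s‖ = 1) (hx : x ∈ (ℝ ∙ s)ᗮ) :
    ⟪s, sphereCollapse s x⟫ = 2 * ‖x‖ ^ 2 - 1 := by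
  rw [Submodule.mem_orthogonal_singleton_iff_inner_right] at hx
  simp [sphereCollapse, inner_add_right, inner_smul_right, hx, hs]

lemma norm_sphereCollapse (hs : ‖s‖ = 1) (hx : x ∈ equatorialDisk s) :
    ‖sphereCollapse s x‖ = 1 := by
  obtain ⟨hxs, hx1⟩ := hx
  rw [SetLike.mem_coe, Submodule.mem_orthogonal_singleton_iff_inner_left] at hxs
  rw [mem_closedBall_zero_iff] at hx1
  have hsq : √(1 - ‖x‖ ^ 2) ^ 2 = 1 - ‖x‖ ^ 2 := Real.sq_sqrt (by nlinarith [norm_nonneg x])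
  have horth : ⟪(2 * √(1 - ‖x‖ ^ 2)) • x, (2 * ‖x‖ ^ 2 - 1) • s⟫ = 0 := by
    simp [inner_smul_left, inner_smul_right, hxs]
  have h := norm_add_sq_eq_norm_sq_add_norm_sq_real horth
  rw [norm_smul, norm_smul, Real.norm_eq_abs, Real.norm_eq_abs, hs] at h
  have h1 : ‖sphereCollapse s x‖ ^ 2 = 1 := by
    rw [sq, sphereCollapse, h]
    nlinarith [sq_abs (2 * √(1 - ‖x‖ ^ 2)), sq_abs (2 * ‖x‖ ^ 2 - 1)]
  nlinarith [norm_nonneg (sphereCollapse s x)]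

lemma sphereCollapse_zero (s : V) : sphereCollapse s 0 = -s := by simp [sphereCollapse]

lemma sphereCollapse_of_norm_eq_one (hx : ‖x‖ = 1) : sphereCollapse s x = s := by
  norm_num [sphereCollapse, hx]

lemma norm_eq_of_sphereCollapse_eq (hs : ‖s‖ = 1) (hx : x ∈ (ℝ ∙ s)ᗮ) (hy : y ∈ (ℝ ∙ s)ᗮ)
    (h : sphereCollapse s x = sphereCollapse s y) : ‖x‖ = ‖y‖ := by
  have h' := congrArg (⟪s, ·⟫) h
  simp only [inner_sphereCollapse hs hx, inner_sphereCollapse hs hy] at h'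
  exact (sq_eq_sq₀ (norm_nonneg x) (norm_nonneg y)).1 (by linarith)

lemma eq_of_sphereCollapse_eq (hs : ‖s‖ = 1) (hx : x ∈ (ℝ ∙ s)ᗮ) (hy : y ∈ (ℝ ∙ s)ᗮ)
    (hx1 : ‖x‖ < 1) (h : sphereCollapse s x = sphereCollapse s y) : x = y := by
  have hc : 0 < 2 * √(1 - ‖x‖ ^ 2) := by
    have : 0 < 1 - ‖x‖ ^ 2 := by nlinarith [norm_nonneg x]
    positivity
  rw [sphereCollapse, sphereCollapse, ← norm_eq_of_sphereCollapse_eq hs hx hy h] at h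
  exact smul_right_injective V hc.ne' (add_right_cancel h)

lemma sphereCollapse_eq_neg_iff (hs : ‖s‖ = 1) (hx : x ∈ (ℝ ∙ s)ᗮ) :
    sphereCollapse s x = -s ↔ x = 0 := by
  refine ⟨fun h => ?_, fun h => h ▸ sphereCollapse_zero s⟩
  have h' := congrArg (⟪s, ·⟫) h
  simp only [inner_sphereCollapse hs hx, inner_neg_right, real_inner_self_eq_norm_sq, hs] at h'
  exact norm_eq_zero.1 (pow_eq_zero_iff two_ne_zero |>.1 (by linarith))

lemma sphereCollapse_eq_self_iff (hs : ‖s‖ = 1) (hx : x ∈ (ℝ ∙ s)ᗮ) :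
    sphereCollapse s x = s ↔ ‖x‖ = 1 := by
  refine ⟨fun h => ?_, sphereCollapse_of_norm_eq_one⟩
  have h' := congrArg (⟪s, ·⟫) h
  simp only [inner_sphereCollapse hs hx, real_inner_self_eq_norm_sq, hs] at h'
  exact (sq_eq_sq₀ (norm_nonneg x) zero_le_one).1 (by linarith)

lemma isCompact_equatorialDisk [ProperSpace V] (s : V) : IsCompact (equatorialDisk s) :=
  (isCompact_closedBall 0 1).inter_left (Submodule.isClosed_orthogonal (ℝ ∙ s))

lemma exists_norm_eq_one_mem_orthogonal (hV : 1 < finrank ℝ V) (s : V) :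
    ∃ u ∈ (ℝ ∙ s)ᗮ, ‖u‖ = 1 := by
  have : FiniteDimensional ℝ V := Module.finite_of_finrank_pos (by omega)
  have hspan : finrank ℝ (ℝ ∙ s) ≤ 1 := (finrank_span_le_card {s}).trans (by simp)
  have hne : (ℝ ∙ s)ᗮ ≠ ⊥ := fun h => by
    have := (ℝ ∙ s).finrank_add_finrank_orthogonal
    rw [h, finrank_bot] at this
    omega
  obtain ⟨v, hv, hv0⟩ := Submodule.exists_mem_ne_zero_of_ne_bot hne
  exact ⟨‖v‖⁻¹ • v, Submodule.smul_mem _ _ hv, norm_smul_inv_norm hv0⟩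

lemma surjOn_sphereCollapse (hs : ‖s‖ = 1) (hV : 1 < finrank ℝ V) :
    SurjOn (sphereCollapse s) (equatorialDisk s) (sphere 0 1) := by
  intro z hz
  rw [mem_sphere_zero_iff_norm] at hz
  set c := ⟪s, z⟫ with hc
  rcases (real_inner_le_norm s z).trans_eq (by rw [hs, hz, one_mul]) |>.eq_or_lt with hc1 | hc1
  · obtain ⟨u, hu, hu1⟩ := exists_norm_eq_one_mem_orthogonal hV s
    refine ⟨u, ⟨hu, mem_closedBall_zero_iff.2 hu1.le⟩, ?_⟩
    rw [sphereCollapse_of_norm_eq_one hu1, (inner_eq_one_iff_of_norm_eq_one hs hz).1 hc1]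
  -- the preimage of `z = v + c • s` is a multiple of `v`, of norm `√((1 + c) / 2)`
  set v := z - c • s
  have hv : v ∈ (ℝ ∙ s)ᗮ := by
    rw [Submodule.mem_orthogonal_singleton_iff_inner_right]
    simp [v, inner_sub_right, inner_smul_right, hs, ← hc]
  have hvn : ‖v‖ ^ 2 = 1 - c ^ 2 := by
    rw [norm_sub_sq_real, inner_smul_right, real_inner_comm, ← hc, norm_smul, hz, hs,
      Real.norm_eq_abs, mul_one, sq_abs]
    ring
  set a := 2 * √((1 - c) / 2)
  have hc0 : 0 < 1 - c := by linarith
  have ha : 0 < a := by positivity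
  have ha2 : a ^ 2 = 2 * (1 - c) := by
    rw [mul_pow, Real.sq_sqrt (by linarith)]
    ring
  have hxn : ‖a⁻¹ • v‖ ^ 2 = (1 + c) / 2 := by
    rw [norm_smul, mul_pow, norm_inv, Real.norm_eq_abs, abs_of_pos ha, inv_pow, ha2, hvn]
    field_simp
    ring
  refine ⟨a⁻¹ • v, ⟨Submodule.smul_mem _ _ hv, mem_closedBall_zero_iff.2 ?_⟩, ?_⟩
  · nlinarith [norm_nonneg (a⁻¹ • v)]
  · have h1 : 1 - ‖a⁻¹ • v‖ ^ 2 = (1 - c) / 2 := by rw [hxn]; ring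
    rw [sphereCollapse, h1, smul_smul, mul_inv_cancel₀ ha.ne', one_smul, hxn,
      show 2 * ((1 + c) / 2) - 1 = c by ring, sub_add_cancel]

end SphereCollapse

section SphereProd

variable {V W : Type*} [NormedAddCommGroup V] [InnerProductSpace ℝ V]
  [NormedAddCommGroup W] [InnerProductSpace ℝ W] (s₁ : sphere (0 : V) 1) (s₂ : sphere (0 : W) 1)

/-- As `V × W` carries the sup norm, this is the closed unit ball of `(ℝ ∙ s₁)ᗮ × (ℝ ∙ s₂)ᗮ`,
whose unit sphere is `∂D × D ∪ D × ∂D`. -/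
abbrev diskProd : Set (V × W) := equatorialDisk (s₁ : V) ×ˢ equatorialDisk (s₂ : W)

def sphereProdCollapse (z : diskProd s₁ s₂) : sphere (0 : V) 1 × sphere (0 : W) 1 :=
  (⟨sphereCollapse s₁ z.1.1,
      mem_sphere_zero_iff_norm.2 (norm_sphereCollapse (norm_eq_of_mem_sphere s₁) z.2.1)⟩,
    ⟨sphereCollapse s₂ z.1.2,
      mem_sphere_zero_iff_norm.2 (norm_sphereCollapse (norm_eq_of_mem_sphere s₂) z.2.2)⟩)

variable {s₁ s₂}

lemma norm_le_one_of_mem_diskProd {z : V × W} (hz : z ∈ diskProd s₁ s₂) : ‖z‖ ≤ 1 :=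
  Prod.norm_def z ▸ max_le (mem_closedBall_zero_iff.1 hz.1.2) (mem_closedBall_zero_iff.1 hz.2.2)

lemma radialPush_mem_diskProd {z : V × W} (hz : z ∈ diskProd s₁ s₂) (t : I) :
    radialPush t z ∈ diskProd s₁ s₂ := by
  have h := norm_radialPush_le_one (norm_le_one_of_mem_diskProd hz) t
  exact ⟨⟨Submodule.smul_mem _ _ hz.1.1, mem_closedBall_zero_iff.2 ((norm_fst_le _).trans h)⟩,
    ⟨Submodule.smul_mem _ _ hz.2.1, mem_closedBall_zero_iff.2 ((norm_snd_le _).trans h)⟩⟩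

def diskProdPush (t : I) : diskProd s₁ s₂ → diskProd s₁ s₂ :=
  Subtype.map (radialPush t) fun _ hz => radialPush_mem_diskProd hz t

lemma diskProdPush_zero_left (z : diskProd s₁ s₂) : diskProdPush 0 z = z :=
  Subtype.ext (radialPush_zero_left _)

lemma diskProdPush_of_one_le_norm {z : diskProd s₁ s₂} (hz : 1 ≤ ‖(z : V × W)‖) (t : I) :
    diskProdPush t z = z :=
  Subtype.ext (radialPush_of_one_le_norm hz t)

lemma continuous_sphereProdCollapse : Continuous (sphereProdCollapse s₁ s₂) := by
  unfold sphereProdCollapse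
  have := continuous_sphereCollapse (s₁ : V)
  have := continuous_sphereCollapse (s₂ : W)
  fun_prop

lemma sphereProdCollapse_eq_neg_iff (z : diskProd s₁ s₂) :
    sphereProdCollapse s₁ s₂ z = (-s₁, -s₂) ↔ (z : V × W) = 0 := by
  simp only [sphereProdCollapse, Prod.ext_iff, Subtype.ext_iff, coe_neg_sphere, Prod.fst_zero,
    Prod.snd_zero, sphereCollapse_eq_neg_iff (norm_eq_of_mem_sphere s₁) z.2.1.1,
    sphereCollapse_eq_neg_iff (norm_eq_of_mem_sphere s₂) z.2.2.1]

lemma sphereProdCollapse_mem_wedgeSet_iff (z : diskProd s₁ s₂) :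
    sphereProdCollapse s₁ s₂ z ∈ wedgeSet s₁ s₂ ↔ ‖(z : V × W)‖ = 1 := by
  simp only [wedgeSet, mem_ofPred_eq, sphereProdCollapse, Subtype.ext_iff,
    sphereCollapse_eq_self_iff (norm_eq_of_mem_sphere s₁) z.2.1.1,
    sphereCollapse_eq_self_iff (norm_eq_of_mem_sphere s₂) z.2.2.1, Prod.norm_def]
  have h₁ := mem_closedBall_zero_iff.1 z.2.1.2
  have h₂ := mem_closedBall_zero_iff.1 z.2.2.2
  constructor
  · rintro (h | h)
    · exact le_antisymm (max_le h₁ h₂) (h ▸ le_max_left _ _)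
    · exact le_antisymm (max_le h₁ h₂) (h ▸ le_max_right _ _)
  · intro h
    rcases max_choice ‖(z : V × W).1‖ ‖(z : V × W).2‖ with h' | h' <;> rw [h'] at h <;> simp [h]

/-- Points with a coordinate on the boundary do not move, and elsewhere the collapse is
injective. -/
lemma sphereProdCollapse_diskProdPush_eq {z z' : diskProd s₁ s₂}
    (h : sphereProdCollapse s₁ s₂ z = sphereProdCollapse s₁ s₂ z') (t : I) :
    sphereProdCollapse s₁ s₂ (diskProdPush t z) = sphereProdCollapse s₁ s₂ (diskProdPush t z') := by
  have hs₁ := norm_eq_of_mem_sphere s₁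
  have hs₂ := norm_eq_of_mem_sphere s₂
  have h₁ : sphereCollapse (s₁ : V) z.1.1 = sphereCollapse (s₁ : V) z'.1.1 :=
    congrArg (fun p => (p.1 : V)) h
  have h₂ : sphereCollapse (s₂ : W) z.1.2 = sphereCollapse (s₂ : W) z'.1.2 :=
    congrArg (fun p => (p.2 : W)) h
  rcases le_or_gt 1 ‖(z : V × W)‖ with hz | hz
  · have hz' : 1 ≤ ‖(z' : V × W)‖ := by
      rwa [Prod.norm_def, ← norm_eq_of_sphereCollapse_eq hs₁ z.2.1.1 z'.2.1.1 h₁,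
        ← norm_eq_of_sphereCollapse_eq hs₂ z.2.2.1 z'.2.2.1 h₂, ← Prod.norm_def]
    rwa [diskProdPush_of_one_le_norm hz, diskProdPush_of_one_le_norm hz']
  · rw [Prod.norm_def, max_lt_iff] at hz
    obtain rfl : z = z' := Subtype.ext (Prod.ext
      (eq_of_sphereCollapse_eq hs₁ z.2.1.1 z'.2.1.1 hz.1 h₁)
      (eq_of_sphereCollapse_eq hs₂ z.2.2.1 z'.2.2.1 hz.2 h₂))
    rfl

variable (s₁ s₂) in
lemma sphereProdCollapse_surjective (hV : 1 < finrank ℝ V) (hW : 1 < finrank ℝ W) :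
    (sphereProdCollapse s₁ s₂).Surjective := by
  rintro ⟨⟨p₁, hp₁⟩, ⟨p₂, hp₂⟩⟩
  obtain ⟨x₁, hx₁, rfl⟩ := surjOn_sphereCollapse (norm_eq_of_mem_sphere s₁) hV hp₁
  obtain ⟨x₂, hx₂, rfl⟩ := surjOn_sphereCollapse (norm_eq_of_mem_sphere s₂) hW hp₂
  exact ⟨⟨(x₁, x₂), hx₁, hx₂⟩, rfl⟩

variable (s₁ s₂) in
lemma isQuotientMap_sphereProdCollapse (hV : 1 < finrank ℝ V) (hW : 1 < finrank ℝ W) :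
    IsQuotientMap (sphereProdCollapse s₁ s₂) := by
  have : FiniteDimensional ℝ V := Module.finite_of_finrank_pos (by omega)
  have : FiniteDimensional ℝ W := Module.finite_of_finrank_pos (by omega)
  have : CompactSpace (diskProd s₁ s₂) := isCompact_iff_compactSpace.1
    ((isCompact_equatorialDisk _).prod (isCompact_equatorialDisk _))
  exact continuous_sphereProdCollapse.isClosedMap.isQuotientMap continuous_sphereProdCollapse
    (sphereProdCollapse_surjective s₁ s₂ hV hW)

lemma wedgeSet_subset_compl_neg :
    wedgeSet s₁ s₂ ⊆ ({(-s₁, -s₂)}ᶜ : Set (sphere (0 : V) 1 × sphere (0 : W) 1)) := by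
  rintro w (h | h) hw <;> rw [mem_singleton_iff] at hw <;> subst hw
  · exact ne_neg_of_mem_sphere ℝ one_ne_zero s₁ h.symm
  · exact ne_neg_of_mem_sphere ℝ one_ne_zero s₂ h.symm

instance : Nonempty (diskProd s₁ s₂) :=
  ⟨⟨0, ⟨Submodule.zero_mem _, mem_closedBall_self zero_le_one⟩,
    ⟨Submodule.zero_mem _, mem_closedBall_self zero_le_one⟩⟩⟩

variable (s₁ s₂) in
def sphereProdPush (t : I) (p : sphere (0 : V) 1 × sphere (0 : W) 1) :
    sphere (0 : V) 1 × sphere (0 : W) 1 :=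
  sphereProdCollapse s₁ s₂ (diskProdPush t (Function.invFun (sphereProdCollapse s₁ s₂) p))

lemma sphereProdPush_sphereProdCollapse (t : I) (z : diskProd s₁ s₂) :
    sphereProdPush s₁ s₂ t (sphereProdCollapse s₁ s₂ z) =
      sphereProdCollapse s₁ s₂ (diskProdPush t z) :=
  sphereProdCollapse_diskProdPush_eq (Function.invFun_eq ⟨z, rfl⟩) t

lemma sphereProdPush_zero_left (hV : 1 < finrank ℝ V) (hW : 1 < finrank ℝ W)
    (p : sphere (0 : V) 1 × sphere (0 : W) 1) :
    sphereProdPush s₁ s₂ 0 p = p := by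
  obtain ⟨z, rfl⟩ := sphereProdCollapse_surjective s₁ s₂ hV hW p
  rw [sphereProdPush_sphereProdCollapse, diskProdPush_zero_left]

variable {p : sphere (0 : V) 1 × sphere (0 : W) 1}

lemma sphereProdPush_ne (hV : 1 < finrank ℝ V) (hW : 1 < finrank ℝ W) (hp : p ≠ (-s₁, -s₂))
    (t : I) : sphereProdPush s₁ s₂ t p ≠ (-s₁, -s₂) := by
  obtain ⟨z, rfl⟩ := sphereProdCollapse_surjective s₁ s₂ hV hW p
  rw [Ne, sphereProdCollapse_eq_neg_iff] at hp
  rw [sphereProdPush_sphereProdCollapse, Ne, sphereProdCollapse_eq_neg_iff]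
  exact radialPush_ne_zero hp t

lemma sphereProdPush_one_mem_wedgeSet (hV : 1 < finrank ℝ V) (hW : 1 < finrank ℝ W)
    (hp : p ≠ (-s₁, -s₂)) :
    sphereProdPush s₁ s₂ 1 p ∈ wedgeSet s₁ s₂ := by
  obtain ⟨z, rfl⟩ := sphereProdCollapse_surjective s₁ s₂ hV hW p
  rw [Ne, sphereProdCollapse_eq_neg_iff] at hp
  rw [sphereProdPush_sphereProdCollapse, sphereProdCollapse_mem_wedgeSet_iff]
  exact (norm_radialPush_one hp).trans (max_eq_right (norm_le_one_of_mem_diskProd z.2))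

lemma sphereProdPush_of_mem_wedgeSet (hV : 1 < finrank ℝ V) (hW : 1 < finrank ℝ W)
    (hp : p ∈ wedgeSet s₁ s₂) (t : I) :
    sphereProdPush s₁ s₂ t p = p := by
  obtain ⟨z, rfl⟩ := sphereProdCollapse_surjective s₁ s₂ hV hW p
  rw [sphereProdCollapse_mem_wedgeSet_iff] at hp
  rw [sphereProdPush_sphereProdCollapse, diskProdPush_of_one_le_norm hp.ge]

lemma continuous_sphereProdPush_compl (hV : 1 < finrank ℝ V) (hW : 1 < finrank ℝ W) :
    Continuous fun q : I × ({(-s₁, -s₂)}ᶜ : Set (sphere (0 : V) 1 × sphere (0 : W) 1)) =>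
      sphereProdPush s₁ s₂ q.1 q.2 := by
  refine ((isQuotientMap_sphereProdCollapse s₁ s₂ hV hW).restrictPreimage_isOpen
    isOpen_compl_singleton).continuous_lift_prod_right
      (g := fun q => sphereProdPush s₁ s₂ q.1 q.2) ?_
  simp only [restrictPreimage_coe, sphereProdPush_sphereProdCollapse]
  refine continuous_sphereProdCollapse.comp (continuous_iff_continuousAt.2 fun q => ?_)
  have hq : ((q.2 : diskProd s₁ s₂) : V × W) ≠ 0 := (sphereProdCollapse_eq_neg_iff _).not.1 q.2.2
  rw [IsInducing.subtypeVal.continuousAt_iff]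
  exact (continuousAt_radialPush hq q.1).comp (x := q)
    (f := fun q => (q.1, ((q.2 : diskProd s₁ s₂) : V × W)))
    (by fun_prop : Continuous _).continuousAt

def sphereProdComplHomotopyEquiv (hV : 1 < finrank ℝ V) (hW : 1 < finrank ℝ W) :
    wedgeSet s₁ s₂ ≃ₕ ({(-s₁, -s₂)}ᶜ : Set (sphere (0 : V) 1 × sphere (0 : W) 1)) :=
  .ofDeformationRetraction wedgeSet_subset_compl_neg
    ⟨fun q => ⟨sphereProdPush s₁ s₂ q.1 q.2, sphereProdPush_ne hV hW q.2.2 q.1⟩,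
      (continuous_sphereProdPush_compl hV hW).subtype_mk _⟩
    (fun p => Subtype.ext (sphereProdPush_zero_left hV hW p))
    (fun p => sphereProdPush_one_mem_wedgeSet hV hW p.2)
    (fun _ hp => Subtype.ext (sphereProdPush_of_mem_wedgeSet hV hW hp 1))

end SphereProd

lemma exists_homeomorph_sphere_apply_eq {V : Type*} [NormedAddCommGroup V] [InnerProductSpace ℝ V]
    {r : ℝ} (x y : sphere (0 : V) r) : ∃ h : sphere (0 : V) r ≃ₜ sphere (0 : V) r, h x = y :=
  ⟨(Submodule.reflection (ℝ ∙ ((x : V) - y))ᗮ).toHomeomorph.subtype fun _ => by simp,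
    Subtype.ext (Submodule.reflection_sub (by simp [norm_eq_of_mem_sphere]))⟩

end

/-- **Example 3.4 of the paper, computation of `L'`.** For any open embedding `e` of `ℝ¹¹`
into `S⁴ × S⁷`, the complement of the image of the open unit ball under `e`, with the
subspace topology, is homotopy equivalent to the wedge `S⁴ ∨ S⁷`
(for any choice of basepoints). -/
theorem complement_of_chart_in_s4_prod_s7_homotopyEquiv_wedge
    (e : EuclideanSpace ℝ (Fin 11) →
      (Metric.sphere (0 : EuclideanSpace ℝ (Fin 5)) 1) ×
        (Metric.sphere (0 : EuclideanSpace ℝ (Fin 8)) 1))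
    (he : Topology.IsOpenEmbedding e)
    (s₄ : Metric.sphere (0 : EuclideanSpace ℝ (Fin 5)) 1)
    (s₇ : Metric.sphere (0 : EuclideanSpace ℝ (Fin 8)) 1) :
    Nonempty (ContinuousMap.HomotopyEquiv
      ((e '' Metric.ball 0 1)ᶜ :
        Set ((Metric.sphere (0 : EuclideanSpace ℝ (Fin 5)) 1) ×
          (Metric.sphere (0 : EuclideanSpace ℝ (Fin 8)) 1)))
      (Wedge2 (Metric.sphere (0 : EuclideanSpace ℝ (Fin 5)) 1)
        (Metric.sphere (0 : EuclideanSpace ℝ (Fin 8)) 1)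
        s₄ s₇)) := by
  obtain ⟨h₁, hh₁⟩ := exists_homeomorph_sphere_apply_eq (e 0).1 (-s₄)
  obtain ⟨h₂, hh₂⟩ := exists_homeomorph_sphere_apply_eq (e 0).2 (-s₇)
  have hΦ : ∀ p, p ∈ ({e 0}ᶜ : Set _) ↔ h₁.prodCongr h₂ p ∈ ({(-s₄, -s₇)}ᶜ : Set _) := fun p => by
    simp only [mem_compl_singleton_iff, ← hh₁, ← hh₂]
    exact (h₁.prodCongr h₂).injective.ne_iff.symm
  have hdim (n : ℕ) : 1 < finrank ℝ (EuclideanSpace ℝ (Fin (n + 2))) := by simp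
  exact ⟨he.complImageBallHomotopyEquiv.trans <|
    ((h₁.prodCongr h₂).subtype hΦ).toHomotopyEquiv.trans <|
    (sphereProdComplHomotopyEquiv (hdim 3) (hdim 6)).symm.trans
      (wedgeHomeomorphWedgeSet s₄ s₇).symm.toHomotopyEquiv⟩
end
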